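/- For the recursive channel combining construction, the combined channel satisfies p_n(y | w) = p(y | w·G_n) for all y ∈ 𝒴^n and w ∈ 𝒳^n, where p_n is defined recursively by combining two independent copies of p_{n/2} via the XOR-and-reverse-shuffle transformation and p acts on vectors memorylessly. -/
import Mathlib


/-- The 2×2 polar kernel `F = [[1,0],[1,1]]` over GF(2). -/
def Fmat : Matrix (Fin 2) (Fin 2) (ZMod 2) := !![1, 0; 1, 1]

lemma two_pow_succ_eq (i : ℕ) : 2 ^ (i + 1) = 2 ^ i + 2 ^ i := by
  rw [pow_succ]; ring

/-- The reverse shuffle as an index map: output position `j` takes input position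
`σ j`; for `j < n/2` (0-indexed) `σ j = 2j`, otherwise `σ j = 2(j - n/2) + 1`. -/
def shuffleIdx (i : ℕ) (j : Fin (2 ^ (i + 1))) : Fin (2 ^ (i + 1)) :=
  if h : (j : ℕ) < 2 ^ i then
    ⟨2 * (j : ℕ), by have := two_pow_succ_eq i; omega⟩
  else
    ⟨2 * ((j : ℕ) - 2 ^ i) + 1, by have := two_pow_succ_eq i; have := j.isLt; omega⟩

/-- The reverse-shuffle permutation matrix `R_n`: `(s ᵥ* R_n) j = s (σ j)`. -/
def Rmat (i : ℕ) : Matrix (Fin (2 ^ (i + 1))) (Fin (2 ^ (i + 1))) (ZMod 2) :=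
  Matrix.of fun k j => if k = shuffleIdx i j then 1 else 0

/-- The Kronecker product `I_{n/2} ⊗ F`, flattened with index `a = 2k + b`. -/
def IkronF (i : ℕ) : Matrix (Fin (2 ^ (i + 1))) (Fin (2 ^ (i + 1))) (ZMod 2) :=
  Matrix.of fun a b =>
    if (a : ℕ) / 2 = (b : ℕ) / 2 then
      Fmat ⟨(a : ℕ) % 2, Nat.mod_lt _ (by norm_num)⟩
           ⟨(b : ℕ) % 2, Nat.mod_lt _ (by norm_num)⟩
    else 0

/-- The Kronecker product `I_2 ⊗ G`, flattened with index `a = b * 2^i + k`. -/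
def I2kronG (i : ℕ) (G : Matrix (Fin (2 ^ i)) (Fin (2 ^ i)) (ZMod 2)) :
    Matrix (Fin (2 ^ (i + 1))) (Fin (2 ^ (i + 1))) (ZMod 2) :=
  Matrix.of fun a b =>
    if (a : ℕ) / 2 ^ i = (b : ℕ) / 2 ^ i then
      G ⟨(a : ℕ) % 2 ^ i, Nat.mod_lt _ (Nat.two_pow_pos i)⟩
        ⟨(b : ℕ) % 2 ^ i, Nat.mod_lt _ (Nat.two_pow_pos i)⟩
    else 0

/-- The polar generator matrix: `G_1 = I_1`,
`G_n = (I_{n/2} ⊗ F) R_n (I_2 ⊗ G_{n/2})`. -/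
def polarG : (i : ℕ) → Matrix (Fin (2 ^ i)) (Fin (2 ^ i)) (ZMod 2)
  | 0 => 1
  | i + 1 => IkronF i * Rmat i * I2kronG i (polarG i)

/-- A memoryless channel acting on vectors: `p(y|x) = ∏ p(y_l | x_l)`. -/
noncomputable def pVec {Y : Type*} (p : Y → ZMod 2 → ℝ) {n : ℕ}
    (y : Fin n → Y) (x : Fin n → ZMod 2) : ℝ :=
  ∏ l, p (y l) (x l)

/-- The recursively combined polar channel `p_n`: two independent copies of
`p_{n/2}` are combined via the XOR (`s_{2k-1} = w_{2k-1} + w_{2k}`, `s_{2k} = w_{2k}`)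
and reverse-shuffle (`v = s R_n`) transformation. -/
noncomputable def pComb {Y : Type*} (p : Y → ZMod 2 → ℝ) :
    (i : ℕ) → (Fin (2 ^ i) → Y) → (Fin (2 ^ i) → ZMod 2) → ℝ
  | 0, y, w => p (y ⟨0, by norm_num⟩) (w ⟨0, by norm_num⟩)
  | i + 1, y, w =>
    let s : Fin (2 ^ (i + 1)) → ZMod 2 := fun a =>
      if h : (a : ℕ) % 2 = 0 then
        w a + w ⟨(a : ℕ) + 1, by have := two_pow_succ_eq i; have := a.isLt; omega⟩
      else w a
    let v : Fin (2 ^ (i + 1)) → ZMod 2 := fun j => s (shuffleIdx i j)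
    pComb p i (fun j => y ⟨(j : ℕ), by have := two_pow_succ_eq i; have := j.isLt; omega⟩)
              (fun j => v ⟨(j : ℕ), by have := two_pow_succ_eq i; have := j.isLt; omega⟩) *
    pComb p i (fun j => y ⟨(j : ℕ) + 2 ^ i, by have := two_pow_succ_eq i; have := j.isLt; omega⟩)
              (fun j => v ⟨(j : ℕ) + 2 ^ i, by have := two_pow_succ_eq i; have := j.isLt; omega⟩)

lemma Fmat_apply (x y : ℕ) (hx : x < 2) (hy : y < 2) :
    Fmat ⟨x, hx⟩ ⟨y, hy⟩ = if y = 0 ∨ x = 1 then 1 else 0 := by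
  interval_cases x <;> interval_cases y <;>
    simp [Fmat, Fin.mk_zero, Fin.mk_one]

lemma vecMul_Rmat (i : ℕ) (t : Fin (2 ^ (i+1)) → ZMod 2) (j : Fin (2 ^ (i+1))) :
    Matrix.vecMul t (Rmat i) j = t (shuffleIdx i j) := by
  simp [Matrix.vecMul, dotProduct, Rmat, mul_ite, mul_one, mul_zero]

lemma vecMul_IkronF (i : ℕ) (w : Fin (2^(i+1)) → ZMod 2) (b : Fin (2^(i+1))) :
    Matrix.vecMul w (IkronF i) b =
      if h : (b:ℕ) % 2 = 0 then
        w b + w ⟨(b:ℕ)+1, by have := two_pow_succ_eq i; have := b.isLt; omega⟩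
      else w b := by
  have hpow := two_pow_succ_eq i
  have hb := b.isLt
  have h0lt : 2*((b:ℕ)/2) < 2^(i+1) := by omega
  have h1lt : 2*((b:ℕ)/2) + 1 < 2^(i+1) := by omega
  have key : Matrix.vecMul w (IkronF i) b =
      w ⟨2*((b:ℕ)/2), h0lt⟩ * (IkronF i) ⟨2*((b:ℕ)/2), h0lt⟩ b +
      w ⟨2*((b:ℕ)/2)+1, h1lt⟩ * (IkronF i) ⟨2*((b:ℕ)/2)+1, h1lt⟩ b := by
    apply Finset.sum_eq_add_of_mem (f := fun a => w a * (IkronF i) a b)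
      ⟨2*((b:ℕ)/2), h0lt⟩ ⟨2*((b:ℕ)/2)+1, h1lt⟩
      (Finset.mem_univ _) (Finset.mem_univ _)
    · simp only [ne_eq, Fin.mk.injEq]; omega
    · intro c _ hc
      have hc0 : (c:ℕ) ≠ 2*((b:ℕ)/2) := fun h => hc.1 (Fin.ext h)
      have hc1 : (c:ℕ) ≠ 2*((b:ℕ)/2)+1 := fun h => hc.2 (Fin.ext h)
      have : ¬ ((c:ℕ)/2 = (b:ℕ)/2) := by omega
      simp [IkronF, this]
  rw [key]
  simp only [IkronF, Matrix.of_apply]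
  have h0 : (2*((b:ℕ)/2)) / 2 = (b:ℕ)/2 := by omega
  have h0m : (2*((b:ℕ)/2)) % 2 = 0 := by omega
  have h1 : (2*((b:ℕ)/2)+1) / 2 = (b:ℕ)/2 := by omega
  have h1m : (2*((b:ℕ)/2)+1) % 2 = 1 := by omega
  simp only [h0, h1, if_pos rfl]
  rw [Fmat_apply, Fmat_apply]
  by_cases hbm : (b:ℕ) % 2 = 0
  · have e0 : (⟨2*((b:ℕ)/2), h0lt⟩ : Fin (2^(i+1))) = b := Fin.ext (by simp; omega)
    have e1 : (⟨2*((b:ℕ)/2)+1, h1lt⟩ : Fin (2^(i+1))) =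
        ⟨(b:ℕ)+1, by omega⟩ := Fin.ext (by simp; omega)
    rw [dif_pos hbm, e0, e1]
    simp [hbm, h0m, h1m]
  · have e1 : (⟨2*((b:ℕ)/2)+1, h1lt⟩ : Fin (2^(i+1))) = b :=
      Fin.ext (by simp; omega)
    rw [dif_neg hbm, e1]
    simp [h0m, h1m, hbm]

lemma prod_split {M : Type*} [CommMonoid M] (i : ℕ) (f : Fin (2^(i+1)) → M) :
    ∏ a, f a =
      (∏ j : Fin (2^i), f ⟨(j:ℕ), by have := two_pow_succ_eq i; have := j.isLt; omega⟩) *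
      ∏ j : Fin (2^i), f ⟨(j:ℕ) + 2^i, by have := two_pow_succ_eq i; have := j.isLt; omega⟩ := by
  have h := two_pow_succ_eq i
  rw [Fintype.prod_equiv (finCongr h) f (fun a => f (finCongr h.symm a))
    (fun a => by simp)]
  rw [Fin.prod_univ_add]
  congr 1
  exact Finset.prod_congr rfl fun j _ => by
    congr 1; exact Fin.ext (by simp [Nat.add_comm])

lemma sum_split {M : Type*} [AddCommMonoid M] (i : ℕ) (f : Fin (2^(i+1)) → M) :
    ∑ a, f a =
      (∑ j : Fin (2^i), f ⟨(j:ℕ), by have := two_pow_succ_eq i; have := j.isLt; omega⟩) +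
      ∑ j : Fin (2^i), f ⟨(j:ℕ) + 2^i, by have := two_pow_succ_eq i; have := j.isLt; omega⟩ := by
  have h := two_pow_succ_eq i
  rw [Fintype.sum_equiv (finCongr h) f (fun a => f (finCongr h.symm a))
    (fun a => by simp)]
  rw [Fin.sum_univ_add]
  congr 1
  exact Finset.sum_congr rfl fun j _ => by
    congr 1; exact Fin.ext (by simp [Nat.add_comm])

lemma vecMul_I2kronG_lo (i : ℕ) (G : Matrix (Fin (2^i)) (Fin (2^i)) (ZMod 2))
    (v : Fin (2^(i+1)) → ZMod 2) (c : Fin (2^i)) :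
    Matrix.vecMul v (I2kronG i G)
      ⟨(c:ℕ), by have := two_pow_succ_eq i; have := c.isLt; omega⟩ =
    Matrix.vecMul
      (fun j : Fin (2^i) => v ⟨(j:ℕ), by have := two_pow_succ_eq i; have := j.isLt; omega⟩)
      G c := by
  have hpos := Nat.two_pow_pos i
  unfold Matrix.vecMul dotProduct
  rw [sum_split i]
  have hzero : ∀ j : Fin (2^i),
      v ⟨(j:ℕ) + 2^i, by have := two_pow_succ_eq i; have := j.isLt; omega⟩ *
      (I2kronG i G) ⟨(j:ℕ) + 2^i, by have := two_pow_succ_eq i; have := j.isLt; omega⟩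
        ⟨(c:ℕ), by have := two_pow_succ_eq i; have := c.isLt; omega⟩ = 0 := by
    intro j
    have hdiv : ((j:ℕ) + 2^i) / 2^i = 1 := by
      rw [Nat.add_div_right _ hpos, Nat.div_eq_of_lt j.isLt]
    have hdivc : (c:ℕ) / 2^i = 0 := Nat.div_eq_of_lt c.isLt
    simp [I2kronG, hdiv, hdivc]
  rw [Finset.sum_congr rfl fun j _ => hzero j]
  simp only [Finset.sum_const_zero, add_zero]
  apply Finset.sum_congr rfl
  intro j _
  congr 1
  have hdivj : (j:ℕ) / 2^i = 0 := Nat.div_eq_of_lt j.isLt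
  have hdivc : (c:ℕ) / 2^i = 0 := Nat.div_eq_of_lt c.isLt
  simp only [I2kronG, Matrix.of_apply, hdivj, hdivc, if_pos rfl]
  congr 1 <;> exact Fin.ext (by simp [Nat.mod_eq_of_lt, j.isLt, c.isLt])

lemma vecMul_I2kronG_hi (i : ℕ) (G : Matrix (Fin (2^i)) (Fin (2^i)) (ZMod 2))
    (v : Fin (2^(i+1)) → ZMod 2) (c : Fin (2^i)) :
    Matrix.vecMul v (I2kronG i G)
      ⟨(c:ℕ) + 2^i, by have := two_pow_succ_eq i; have := c.isLt; omega⟩ =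
    Matrix.vecMul
      (fun j : Fin (2^i) => v ⟨(j:ℕ) + 2^i, by have := two_pow_succ_eq i; have := j.isLt; omega⟩)
      G c := by
  have hpos := Nat.two_pow_pos i
  unfold Matrix.vecMul dotProduct
  rw [sum_split i]
  have hdivc : ((c:ℕ) + 2^i) / 2^i = 1 := by
    rw [Nat.add_div_right _ hpos, Nat.div_eq_of_lt c.isLt]
  have hzero : ∀ j : Fin (2^i),
      v ⟨(j:ℕ), by have := two_pow_succ_eq i; have := j.isLt; omega⟩ *
      (I2kronG i G) ⟨(j:ℕ), by have := two_pow_succ_eq i; have := j.isLt; omega⟩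
        ⟨(c:ℕ) + 2^i, by have := two_pow_succ_eq i; have := c.isLt; omega⟩ = 0 := by
    intro j
    have hdivj : (j:ℕ) / 2^i = 0 := Nat.div_eq_of_lt j.isLt
    simp [I2kronG, hdivj, hdivc]
  rw [Finset.sum_congr rfl fun j _ => hzero j]
  simp only [Finset.sum_const_zero, zero_add]
  apply Finset.sum_congr rfl
  intro j _
  congr 1
  have hdivj : ((j:ℕ) + 2^i) / 2^i = 1 := by
    rw [Nat.add_div_right _ hpos, Nat.div_eq_of_lt j.isLt]
  have hmj : ((j:ℕ) + 2^i) % 2^i = (j:ℕ) := by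
    rw [Nat.add_mod_right, Nat.mod_eq_of_lt j.isLt]
  have hmc : ((c:ℕ) + 2^i) % 2^i = (c:ℕ) := by
    rw [Nat.add_mod_right, Nat.mod_eq_of_lt c.isLt]
  simp only [I2kronG, Matrix.of_apply, hdivj, hdivc, if_pos rfl]
  congr 1 <;> exact Fin.ext (by simp [hmj, hmc])

/-- the combined channel satisfies `p_n(y|w) = p(y | w G_n)`. -/
theorem pComb_eq_pVec_polarG {Y : Type*} (p : Y → ZMod 2 → ℝ) (i : ℕ)
    (y : Fin (2 ^ i) → Y) (w : Fin (2 ^ i) → ZMod 2) :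
    pComb p i y w = pVec p y (Matrix.vecMul w (polarG i)) := by
  induction i with
  | zero =>
    show pComb p 0 y w = _
    rw [show polarG 0 = 1 from rfl, Matrix.vecMul_one]
    simp only [pComb, pVec]
    exact (Fin.prod_univ_one fun l => p (y l) (w l)).symm
  | succ i ih =>
    simp only [pComb]
    rw [ih, ih]
    rw [show polarG (i+1) = IkronF i * Rmat i * I2kronG i (polarG i) from rfl]
    rw [← Matrix.vecMul_vecMul, ← Matrix.vecMul_vecMul]
    -- u = v
    have hu : Matrix.vecMul (Matrix.vecMul w (IkronF i)) (Rmat i) =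
        fun j => (fun a : Fin (2^(i+1)) =>
          if h : (a : ℕ) % 2 = 0 then
            w a + w ⟨(a : ℕ) + 1, by have := two_pow_succ_eq i; have := a.isLt; omega⟩
          else w a) (shuffleIdx i j) := by
      funext j
      rw [vecMul_Rmat, vecMul_IkronF]
    rw [hu]
    have lo := vecMul_I2kronG_lo i (polarG i)
      (fun j => (fun a : Fin (2^(i+1)) =>
          if h : (a : ℕ) % 2 = 0 then
            w a + w ⟨(a : ℕ) + 1, by have := two_pow_succ_eq i; have := a.isLt; omega⟩
          else w a) (shuffleIdx i j))
    have hi' := vecMul_I2kronG_hi i (polarG i)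
      (fun j => (fun a : Fin (2^(i+1)) =>
          if h : (a : ℕ) % 2 = 0 then
            w a + w ⟨(a : ℕ) + 1, by have := two_pow_succ_eq i; have := a.isLt; omega⟩
          else w a) (shuffleIdx i j))
    conv_rhs => rw [pVec, prod_split i]
    congr 1
    · unfold pVec
      apply Finset.prod_congr rfl
      intro j _
      congr 1
      exact (lo j).symm
    · unfold pVec
      apply Finset.prod_congr rfl
      intro j _
      congr 1
      exact (hi' j).symm
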